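/- arXiv:2510.25582 — 2 statements merged into one kernel-verified Lean document; each statement's English description precedes it below -/
import Mathlib

section
/- Let R ≥ 1, Δ = 2R, and let μ be the probability distribution on positive reals with P(z = 1) = 1 − 1/Δ and P(z = Δ) = 1/Δ. Then for every λ > 0 and every ρ ≥ Δ², the geometric bidding strategy X = (λ·ρ^i)_{i≥0} satisfies E_{z∼μ}[cost(X,z)] ≥ Δ, and consequently cons(X,μ) ≥ R. -/
/-!
Write `Δ = 2R`. Either the first bid reaching `1` already reaches `Δ`, so the cost of target `1`
is at least `Δ`; or it lies in `[1, Δ)`, so the target `Δ` is only reached at a later bid, which is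
at least `ρ ≥ Δ²` times larger. Since the target `Δ` always costs at least `Δ` and carries weight
`1/Δ`, in both cases the expected cost is at least `Δ`, while the expected target is `2 - 1/Δ ≤ 2`.
-/

/-- The least index `i` such that the bid `X i` reaches the target `u`. -/
noncomputable def costIdx (X : ℕ → ℝ) (u : ℝ) : ℕ := sInf {i : ℕ | u ≤ X i}

/-- The cost of bidding strategy `X` on target `u`: the sum of bids up to and
including the first bid that is at least `u`. -/
noncomputable def cost (X : ℕ → ℝ) (u : ℝ) : ℝ :=
  ∑ j ∈ Finset.range (costIdx X u + 1), X j

section BiddingStrategy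

variable {X : ℕ → ℝ}

theorem le_apply_costIdx (hX : ∀ u, ∃ i, u ≤ X i) (u : ℝ) : u ≤ X (costIdx X u) :=
  Nat.sInf_mem (hX u)

theorem lt_costIdx_of_apply_lt (hmono : Monotone X) (hX : ∀ u, ∃ i, u ≤ X i) {u : ℝ} {i : ℕ}
    (hi : X i < u) : i < costIdx X u := by
  by_contra! h
  exact (le_apply_costIdx hX u).trans (hmono h) |>.not_gt hi

theorem cost_nonneg (h0 : ∀ i, 0 ≤ X i) (u : ℝ) : 0 ≤ cost X u :=
  Finset.sum_nonneg fun i _ => h0 i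

theorem apply_costIdx_le_cost (h0 : ∀ i, 0 ≤ X i) (u : ℝ) : X (costIdx X u) ≤ cost X u :=
  Finset.single_le_sum (fun i _ => h0 i) (Finset.self_mem_range_succ _)

theorem le_cost (h0 : ∀ i, 0 ≤ X i) (hX : ∀ u, ∃ i, u ≤ X i) (u : ℝ) : u ≤ cost X u :=
  (le_apply_costIdx hX u).trans (apply_costIdx_le_cost h0 u)

theorem le_cost_one_or_le_cost (h0 : ∀ i, 0 ≤ X i) (hmono : Monotone X)
    (hX : ∀ u, ∃ i, u ≤ X i) {ρ : ℝ} (hρ : 0 ≤ ρ) (hratio : ∀ i, ρ * X i ≤ X (i + 1))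
    (Δ : ℝ) : Δ ≤ cost X 1 ∨ ρ ≤ cost X Δ := by
  set i := costIdx X 1
  have hi : 1 ≤ X i := le_apply_costIdx hX 1
  by_cases hΔ : Δ ≤ X i
  · exact .inl (hΔ.trans (apply_costIdx_le_cost h0 1))
  · have hlt : i + 1 ≤ costIdx X Δ := lt_costIdx_of_apply_lt hmono hX (not_le.mp hΔ)
    right
    calc ρ ≤ ρ * X i := le_mul_of_one_le_right hρ hi
      _ ≤ X (i + 1) := hratio i
      _ ≤ X (costIdx X Δ) := hmono hlt
      _ ≤ cost X Δ := apply_costIdx_le_cost h0 Δ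

end BiddingStrategy

section Geometric

variable {lam ρ : ℝ}

theorem geometric_nonneg (hlam : 0 < lam) (hρ : 0 ≤ ρ) (i : ℕ) : 0 ≤ lam * ρ ^ i := by
  positivity

theorem geometric_monotone (hlam : 0 < lam) (hρ : 1 ≤ ρ) : Monotone fun i : ℕ => lam * ρ ^ i :=
  fun _ _ hij => mul_le_mul_of_nonneg_left (pow_le_pow_right₀ hρ hij) hlam.le

theorem geometric_unbounded (hlam : 0 < lam) (hρ : 1 < ρ) (u : ℝ) : ∃ i : ℕ, u ≤ lam * ρ ^ i := by
  obtain ⟨i, hi⟩ := pow_unbounded_of_one_lt (u / lam) hρ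
  exact ⟨i, by rw [div_lt_iff₀ hlam] at hi; linarith⟩

theorem geometric_ratio (i : ℕ) : ρ * (lam * ρ ^ i) ≤ lam * ρ ^ (i + 1) :=
  le_of_eq (by ring)

end Geometric

theorem le_two_point_mean {Δ c₁ c₂ : ℝ} (hΔ : 1 ≤ Δ) (hc₁ : 0 ≤ c₁) (hc₂ : Δ ≤ c₂)
    (h : Δ ≤ c₁ ∨ Δ ^ 2 ≤ c₂) : Δ ≤ (1 - 1 / Δ) * c₁ + 1 / Δ * c₂ := by
  have hΔ0 : 0 < Δ := by linarith
  have hw : 0 ≤ 1 - 1 / Δ := by rw [sub_nonneg, div_le_one hΔ0]; exact hΔ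
  rcases h with h | h
  · calc Δ = (1 - 1 / Δ) * Δ + 1 / Δ * Δ := by field_simp; ring
      _ ≤ (1 - 1 / Δ) * c₁ + 1 / Δ * c₂ := by gcongr
  · calc Δ = 1 / Δ * Δ ^ 2 := by field_simp
      _ ≤ 1 / Δ * c₂ := by gcongr
      _ ≤ (1 - 1 / Δ) * c₁ + 1 / Δ * c₂ := le_add_of_nonneg_left (mul_nonneg hw hc₁)

theorem stmt12 (R : ℝ) (hR : 1 ≤ R) (lam ρ : ℝ) (hlam : 0 < lam)
    (hρ : (2 * R) ^ 2 ≤ ρ) :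
    2 * R ≤ (1 - 1 / (2 * R)) * cost (fun i : ℕ => lam * ρ ^ i) 1
              + (1 / (2 * R)) * cost (fun i : ℕ => lam * ρ ^ i) (2 * R) ∧
    R ≤ ((1 - 1 / (2 * R)) * cost (fun i : ℕ => lam * ρ ^ i) 1
              + (1 / (2 * R)) * cost (fun i : ℕ => lam * ρ ^ i) (2 * R)) /
          ((1 - 1 / (2 * R)) * 1 + (1 / (2 * R)) * (2 * R)) := by
  have hρ1 : 1 < ρ := by nlinarith
  have h0 := geometric_nonneg hlam (ρ := ρ) (by linarith)
  have hunb := geometric_unbounded hlam hρ1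
  have hmean := le_two_point_mean (by linarith) (cost_nonneg h0 1) (le_cost h0 hunb (2 * R))
    ((le_cost_one_or_le_cost h0 (geometric_monotone hlam hρ1.le) hunb (by linarith)
      geometric_ratio (2 * R)).imp_right hρ.trans)
  refine ⟨hmean, ?_⟩
  have hmass : (1 - 1 / (2 * R)) * 1 + 1 / (2 * R) * (2 * R) = 2 - 1 / (2 * R) := by
    field_simp; ring
  have hinv : 0 < 1 / (2 * R) ∧ 1 / (2 * R) ≤ 1 :=
    ⟨by positivity, div_le_one_of_le₀ (by linarith) (by linarith)⟩
  rw [hmass, le_div_iff₀ (by linarith)]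
  nlinarith
end

section
/- Let a > 1, δ ∈ [0,2), λ ∈ [1,a), j ∈ ℤ, and set û = λ·a^{j+δ}. For every s ∈ [δ,2) the search cost of the bi-infinite linear-search strategy with turn distances λ·a^{i+s} (i ∈ ℤ) for a target at distance û on the half-line explored at iterations of the parity of j equals û + 2·Σ_{i=−∞}^{j−1} λ·a^{i+s} = û + 2λ·a^{j+s}/(a−1), and its expectation over s drawn uniformly from [δ,2) satisfies (1/(2−δ))·∫_δ^2 (û + 2λ·a^{j+s}/(a−1)) ds ≤ û · (1 + 2(a² − a^δ)/(a^δ (2−δ)(a−1) ln a)). -/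
/-!
Reindexing the iterations before `j` by `n ↦ j - 1 - n` turns the turn distances into a geometric
series of ratio `1/a`, which sums to `λ a^(j+s) / (a - 1)`. The expected cost is then the integral
of `a^s = exp (s log a)` over `[δ, 2]`, i.e. `(a² - a^δ) / log a`, and the bound holds with equality.
-/

open Real

def natEquivIntLt (j : ℤ) : ℕ ≃ {i : ℤ // i < j} where
  toFun n := ⟨j - 1 - n, by omega⟩
  invFun i := (j - 1 - i.1).toNat
  left_inv n := by simp
  right_inv i := by ext; simp; omega

theorem hasSum_rpow_int_lt {a : ℝ} (ha : 1 < a) (j : ℤ) (s : ℝ) :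
    HasSum (fun i : {i : ℤ // i < j} => a ^ ((i : ℝ) + s)) (a ^ ((j : ℝ) + s) / (a - 1)) := by
  have ha0 : 0 < a := by linarith
  rw [← (natEquivIntLt j).hasSum_iff]
  have hterm : ∀ n : ℕ, a ^ (((natEquivIntLt j n : ℤ) : ℝ) + s)
      = a ^ ((j : ℝ) + s) * a⁻¹ * a⁻¹ ^ n := by
    intro n
    have : ((natEquivIntLt j n : ℤ) : ℝ) + s = ((j : ℝ) + s) - ((n + 1 : ℕ) : ℝ) := by
      push_cast [natEquivIntLt, Equiv.coe_fn_mk]; ring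
    rw [this, rpow_sub ha0, rpow_natCast, pow_succ, inv_pow]
    field_simp
  simp only [Function.comp_def, hterm]
  have hsum : a ^ ((j : ℝ) + s) / (a - 1) = a ^ ((j : ℝ) + s) * a⁻¹ * (1 - a⁻¹)⁻¹ := by
    have : a - 1 ≠ 0 := by linarith
    field_simp
  rw [hsum]
  exact (hasSum_geometric_of_lt_one (by positivity) (inv_lt_one_of_one_lt₀ ha)).mul_left _

theorem integral_const_rpow {a : ℝ} (ha : 0 < a) (ha1 : a ≠ 1) (x y : ℝ) :
    ∫ s in x..y, a ^ s = (a ^ y - a ^ x) / log a := by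
  have hlog : log a ≠ 0 := log_ne_zero_of_pos_of_ne_one ha ha1
  rw [intervalIntegral.integral_eq_sub_of_hasDerivAt (f := fun s => a ^ s / log a), sub_div]
  · intro s _
    simpa [mul_div_cancel_right₀ _ hlog] using
      (hasStrictDerivAt_const_rpow ha s).hasDerivAt.div_const (log a)
  · exact (continuous_const_rpow ha.ne').intervalIntegrable _ _

theorem integral_const_add_mul_rpow {a : ℝ} (ha : 0 < a) (ha1 : a ≠ 1) (c K x y : ℝ) :
    ∫ s in x..y, (c + K * a ^ s) = (y - x) * c + K * ((a ^ y - a ^ x) / log a) := by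
  rw [intervalIntegral.integral_add intervalIntegrable_const
      (((continuous_const_rpow ha.ne').const_mul K).intervalIntegrable _ _),
    intervalIntegral.integral_const, intervalIntegral.integral_const_mul,
    integral_const_rpow ha ha1, smul_eq_mul]

theorem stmt14_general (a δ lam : ℝ) (j : ℤ) (ha : 1 < a) (hδ : δ ∈ Set.Ico (0:ℝ) 2) :
    (∀ s ∈ Set.Ico δ 2,
        lam * a ^ ((j : ℝ) + δ) +
            2 * ∑' i : {i : ℤ // i < j}, lam * a ^ ((i.1 : ℝ) + s) =
          lam * a ^ ((j : ℝ) + δ) + 2 * lam * a ^ ((j : ℝ) + s) / (a - 1)) ∧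
    (1 / (2 - δ)) * (∫ s in δ..2,
          (lam * a ^ ((j : ℝ) + δ) + 2 * lam * a ^ ((j : ℝ) + s) / (a - 1))) ≤
      lam * a ^ ((j : ℝ) + δ) *
        (1 + 2 * (a ^ (2:ℝ) - a ^ δ) / (a ^ δ * (2 - δ) * (a - 1) * Real.log a)) := by
  have ha0 : 0 < a := by linarith
  refine ⟨fun s _ => ?_, le_of_eq ?_⟩
  · rw [((hasSum_rpow_int_lt ha j s).mul_left lam).tsum_eq]
    ring
  · have hcost : ∀ s : ℝ, lam * a ^ ((j : ℝ) + δ) + 2 * lam * a ^ ((j : ℝ) + s) / (a - 1)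
        = lam * a ^ ((j : ℝ) + δ) + 2 * lam * a ^ (j : ℝ) / (a - 1) * a ^ s := fun s => by
      rw [rpow_add ha0 (j : ℝ) s]; ring
    have h2δ : (2 : ℝ) - δ ≠ 0 := by linarith [hδ.2]
    have ha1 : a - 1 ≠ 0 := by linarith
    have hlog : log a ≠ 0 := (log_pos ha).ne'
    simp_rw [hcost, integral_const_add_mul_rpow ha0 ha.ne', rpow_add ha0]
    field_simp

theorem stmt14 (a δ lam : ℝ) (j : ℤ) (ha : 1 < a) (hδ : δ ∈ Set.Ico (0:ℝ) 2)
    (hlam : lam ∈ Set.Ico (1:ℝ) a) :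
    (∀ s ∈ Set.Ico δ 2,
        lam * a ^ ((j : ℝ) + δ) +
            2 * ∑' i : {i : ℤ // i < j}, lam * a ^ ((i.1 : ℝ) + s) =
          lam * a ^ ((j : ℝ) + δ) + 2 * lam * a ^ ((j : ℝ) + s) / (a - 1)) ∧
    (1 / (2 - δ)) * (∫ s in δ..2,
          (lam * a ^ ((j : ℝ) + δ) + 2 * lam * a ^ ((j : ℝ) + s) / (a - 1))) ≤
      lam * a ^ ((j : ℝ) + δ) *
        (1 + 2 * (a ^ (2:ℝ) - a ^ δ) / (a ^ δ * (2 - δ) * (a - 1) * Real.log a)) :=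
  stmt14_general a δ lam j ha hδ
end
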